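/- In a dependence space, if B is an independent subset and A is a basis, then among independent sets X with B ⊆ X ⊆ A ∪ B there exists one that is maximal with respect to inclusion, and any such maximal X is a basis of S. -/

import Mathlib

variable {α : Type*}

/-- A set is dependent if it contains a directly dependent (finite) set. -/
def Dep (Δ : Set (Finset α)) (A : Set α) : Prop :=
  ∃ D ∈ Δ, (D : Set α) ⊆ A

/-- A set is independent if it is not dependent. -/
def Indep (Δ : Set (Finset α)) (A : Set α) : Prop := ¬ Dep Δ A

/-- `x` depends on `A`: `x ∈ A`, or there are distinct `x₀ = x, x₁, …, xₙ` with
`x₁, …, xₙ ∈ A` and `{x₀, …, xₙ} ∈ Δ` (encoded via a finset `D`). -/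
def DependsOn' (Δ : Set (Finset α)) (x : α) (A : Set α) : Prop :=
  x ∈ A ∨ ∃ D ∈ Δ, x ∈ D ∧ ((D : Set α) \ {x}) ⊆ A

/-- Transitivity axiom of a dependence space. -/
def TransAxiom (Δ : Set (Finset α)) : Prop :=
  ∀ (x : α) (A B : Set α), DependsOn' Δ x A → (∀ a ∈ A, DependsOn' Δ a B) →
    DependsOn' Δ x B

/-- A basis: an independent set on which every element depends. -/
def IsBasis (Δ : Set (Finset α)) (A : Set α) : Prop :=
  Indep Δ A ∧ ∀ x : α, DependsOn' Δ x A

theorem maximal_between_exists_and_is_basis (Δ : Set (Finset α))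
    (hcard : ∀ D ∈ Δ, 2 ≤ D.card) (htrans : TransAxiom Δ)
    (A B : Set α) (hA : IsBasis Δ A) (hB : Indep Δ B) :
    (∃ X : Set α, Indep Δ X ∧ B ⊆ X ∧ X ⊆ A ∪ B ∧
      ∀ Y : Set α, Indep Δ Y → B ⊆ Y → Y ⊆ A ∪ B → X ⊆ Y → X = Y) ∧
    (∀ X : Set α, Indep Δ X → B ⊆ X → X ⊆ A ∪ B →
      (∀ Y : Set α, Indep Δ Y → B ⊆ Y → Y ⊆ A ∪ B → X ⊆ Y → X = Y) →
      IsBasis Δ X) := by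
  constructor
  · -- existence via Zorn
    obtain ⟨X, hBX, hX⟩ := zorn_subset_nonempty
      {X : Set α | Indep Δ X ∧ B ⊆ X ∧ X ⊆ A ∪ B}
      (fun c hcS hchain hcne => by
        refine ⟨⋃₀ c, ⟨?_, ?_, ?_⟩, fun s hs => Set.subset_sUnion_of_mem hs⟩
        · rintro ⟨D, hD, hDsub⟩
          obtain ⟨t, htc, hDt⟩ := hchain.directedOn.exists_mem_subset_of_finset_subset_biUnion
            hcne (by simpa [Set.sUnion_eq_biUnion] using hDsub)
          exact (hcS htc).1 ⟨D, hD, hDt⟩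
        · obtain ⟨t, htc⟩ := hcne
          exact (hcS htc).2.1.trans (Set.subset_sUnion_of_mem htc)
        · exact Set.sUnion_subset fun t htc => (hcS htc).2.2)
      B ⟨hB, le_refl _, Set.subset_union_right⟩
    exact ⟨X, hX.prop.1, hX.prop.2.1, hX.prop.2.2,
      fun Y hY hBY hYAB hXY => hX.eq_of_subset ⟨hY, hBY, hYAB⟩ hXY⟩
  · -- maximality implies basis
    intro X hXi hBX hXAB hmax
    refine ⟨hXi, fun x => ?_⟩
    refine htrans x A X (hA.2 x) (fun a ha => ?_)
    by_cases haX : a ∈ X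
    · exact Or.inl haX
    · have hdep : Dep Δ (X ∪ {a}) := by
        by_contra hind
        have := hmax (X ∪ {a}) hind (hBX.trans Set.subset_union_left)
          (Set.union_subset hXAB (by simpa using Or.inl ha)) Set.subset_union_left
        exact haX (this ▸ Set.mem_union_right X rfl)
      obtain ⟨D, hD, hDsub⟩ := hdep
      have haD : a ∈ D := by
        by_contra haD
        exact hXi ⟨D, hD, fun y hy => (hDsub hy).resolve_right (by
          rintro rfl; exact haD hy)⟩
      refine Or.inr ⟨D, hD, haD, fun y hy => ?_⟩
      obtain ⟨hyD, hya⟩ := hy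
      exact (hDsub hyD).resolve_right hya
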